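/- Let r, s ≥ 0 be integers with r + s ≥ 1, and let ε > 0 be real. Then there exist a constant c = c(r,s,ε) ∈ (0,1] and an integer M₀ = M₀(r,s,ε) > 0 such that for every finite set 𝓜 of even cardinality M ≥ M₀ and every involution ψ : 𝓜 → 𝓜 with no fixed points, there is a subset E ⊆ X_ψ with |E| < ε·|X_ψ| such that: for every subset B ⊆ 𝓜 with |B| > c·M, every vector x = (x_1, …, x_M) ∈ X_ψ \ E, and every bijection φ : 𝓜 → 𝓜, there exist elements u, v ∈ B with φ(u) = v such that u occurs at most r times among the components of x and v occurs at most s times among the components of x. -/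

import Mathlib

/-!
Write `m = |𝓜| = 2n`. A ψ-symmetric vector `x` is determined by its first half `f ∈ 𝓜ⁿ`,
and a value `y` occurs in `x` exactly as often as `f` hits the pair `{y, ψ y}`.

Let `W(x) = 2 m₀(x) + m₁(x)`, where `mₖ(x)` is the number of values occurring exactly `k`
times. Since `r + s ≥ 1`, every value counted by `W` lies in `{occ ≤ r}` or `{occ ≤ s}`, and
a value occurring zero times lies in both, so `W(x) ≤ #{occ ≤ r} + #{occ ≤ s}`. Hence if
`W(x) > 21m/20` and `|B| > 39m/40`, the sets `B ∩ {occ ≤ r}` and `B ∩ {occ ≤ s}` have total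
size greater than `m`, and by pigeonhole the injection `φ` maps a point of the first into the
second.

The exceptional set `E = {W ≤ 21m/20}` is small by Chebyshev's inequality. Counting
half-vectors by how often they hit one pair or two disjoint pairs gives the mean
`(3m - 4)(1 - 2/m)^(n-1) ≥ (3/e - o(1)) m > 1.1 m` and a variance of at most `10 m`, so
`|E| ≤ 4000 |X_ψ| / m`.
-/

open Finset

/-- The set of ψ-symmetric vectors of length `M`: vectors `x` with
`x (M+1-j) = ψ (x j)` for all `j` (0-indexed: `x j.rev = ψ (x j)`). -/
def Xpsi (α : Type*) [Fintype α] [DecidableEq α] (M : ℕ) (ψ : α → α) :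
    Finset (Fin M → α) :=
  Finset.univ.filter fun x => ∀ j : Fin M, x j.rev = ψ (x j)

/-- The number of occurrences of `y` among the components of `x`. -/
def occCount {α : Type*} {M : ℕ} [DecidableEq α] (x : Fin M → α) (y : α) : ℕ :=
  (Finset.univ.filter fun j => x j = y).card

/-- `mCount x k` is the number of elements occurring exactly `k` times among
the components of `x`. -/
def mCount {α : Type*} {M : ℕ} [Fintype α] [DecidableEq α] (x : Fin M → α) (k : ℕ) : ℕ :=
  (Finset.univ.filter fun y => occCount x y = k).card

/-- The set of fixed points of `ψ`. -/
def fixPts (α : Type*) [Fintype α] [DecidableEq α] (ψ : α → α) : Finset α :=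
  Finset.univ.filter fun y => ψ y = y

open Function

section HitCount

variable {α : Type*} [DecidableEq α]

def hitCount {n : ℕ} (P : Finset α) (f : Fin n → α) : ℕ := #{j | f j ∈ P}

lemma hitCount_cons {n : ℕ} (P : Finset α) (a : α) (g : Fin n → α) :
    hitCount P (Fin.cons a g : Fin (n + 1) → α) = (if a ∈ P then 1 else 0) + hitCount P g := by
  simp only [hitCount, card_filter, Fin.sum_univ_succ, Fin.cons_zero, Fin.cons_succ]

@[simp] lemma hitCount_empty {n : ℕ} (f : Fin n → α) : hitCount ∅ f = 0 := by
  simp [hitCount]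

variable [Fintype α]

def countHits (P Q : Finset α) (n i j : ℕ) : ℕ :=
  #{f : Fin n → α | hitCount P f = i ∧ hitCount Q f = j}

lemma countHits_comm (P Q : Finset α) (n i j : ℕ) :
    countHits P Q n i j = countHits Q P n j i := by
  simp only [countHits, and_comm]

lemma countHits_zero (P Q : Finset α) (i j : ℕ) :
    countHits P Q 0 i j = if i = 0 ∧ j = 0 then 1 else 0 := by
  by_cases h : i = 0 ∧ j = 0 <;> simp [countHits, hitCount, h, eq_comm]

lemma countHits_succ {P Q : Finset α} (hPQ : Disjoint P Q) (n i j : ℕ) :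
    countHits P Q (n + 1) i j =
      #P * (if i = 0 then 0 else countHits P Q n (i - 1) j) +
      #Q * (if j = 0 then 0 else countHits P Q n i (j - 1)) +
      #(P ∪ Q)ᶜ * countHits P Q n i j := by
  let F (a : α) : ℕ := #{g : Fin n → α |
    (if a ∈ P then 1 else 0) + hitCount P g = i ∧ (if a ∈ Q then 1 else 0) + hitCount Q g = j}
  have hsplit : countHits P Q (n + 1) i j = ∑ a, F a := by
    rw [countHits, card_filter, ← (Fin.consEquiv fun _ => α).sum_comp, Fintype.sum_prod_type]
    simp only [F, card_filter]
    exact sum_congr rfl fun a _ => sum_congr rfl fun g _ => by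
      rw [← hitCount_cons, ← hitCount_cons]; rfl
  have hP : ∀ a ∈ P, F a = if i = 0 then 0 else countHits P Q n (i - 1) j := by
    intro a ha
    simp only [F, ha, disjoint_left.mp hPQ ha, if_true, if_false, zero_add]
    split_ifs with hi
    · simp [hi]
    · congr 1; ext g; simp only [mem_filter, mem_univ, true_and]; omega
  have hQ : ∀ a ∈ Q, F a = if j = 0 then 0 else countHits P Q n i (j - 1) := by
    intro a ha
    simp only [F, ha, disjoint_right.mp hPQ ha, if_true, if_false, zero_add]
    split_ifs with hj
    · simp [hj]
    · congr 1; ext g; simp only [mem_filter, mem_univ, true_and]; omega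
  have hR : ∀ a ∈ (P ∪ Q)ᶜ, F a = countHits P Q n i j := by
    intro a ha
    simp only [mem_compl, mem_union, not_or] at ha
    simp only [F, ha, if_false, zero_add, countHits]
  rw [hsplit, ← sum_add_sum_compl (P ∪ Q), sum_union hPQ, sum_const_nat hP, sum_const_nat hQ,
    sum_const_nat hR]

lemma countHits_zero_zero {P Q : Finset α} (hPQ : Disjoint P Q) (n : ℕ) :
    countHits P Q n 0 0 = #(P ∪ Q)ᶜ ^ n := by
  induction n with
  | zero => simp [countHits_zero]
  | succ n ih => rw [countHits_succ hPQ, ih]; simp [pow_succ, mul_comm]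

lemma countHits_one_zero {P Q : Finset α} (hPQ : Disjoint P Q) (n : ℕ) :
    countHits P Q (n + 1) 1 0 = (n + 1) * #P * #(P ∪ Q)ᶜ ^ n := by
  induction n with
  | zero => simp [countHits_succ hPQ, countHits_zero]
  | succ n ih =>
    rw [countHits_succ hPQ, ih, countHits_zero_zero hPQ]
    simp only [one_ne_zero, if_false, if_true]
    ring

lemma countHits_zero_one {P Q : Finset α} (hPQ : Disjoint P Q) (n : ℕ) :
    countHits P Q (n + 1) 0 1 = (n + 1) * #Q * #(P ∪ Q)ᶜ ^ n := by
  rw [countHits_comm, countHits_one_zero hPQ.symm, union_comm]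

lemma countHits_one_one {P Q : Finset α} (hPQ : Disjoint P Q) (n : ℕ) :
    countHits P Q (n + 2) 1 1 = (n + 2) * (n + 1) * #P * #Q * #(P ∪ Q)ᶜ ^ n := by
  induction n with
  | zero => simp [countHits_succ hPQ, countHits_zero]; ring
  | succ n ih =>
    rw [countHits_succ hPQ, ih, countHits_zero_one hPQ, countHits_one_zero hPQ]
    simp only [one_ne_zero, if_false]
    ring

end HitCount

section Symmetric

variable {α : Type*} (ψ : α → α) {n : ℕ}

def symmExt (f : Fin n → α) : Fin (n + n) → α := Fin.append f (ψ ∘ f ∘ Fin.rev)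

lemma symmExt_injective : Injective (symmExt ψ (n := n)) := fun f g h => by
  funext i
  simpa [symmExt] using congrFun h (Fin.castAdd n i)

private lemma rev_castAdd_self (i : Fin n) : (Fin.castAdd n i).rev = Fin.natAdd n i.rev := by
  ext; simp; omega

private lemma rev_natAdd_self (i : Fin n) : (Fin.natAdd n i).rev = Fin.castAdd n i.rev := by
  ext; simp; omega

variable [DecidableEq α]

lemma Xpsi_eq_map [Fintype α] (hψ : Involutive ψ) :
    Xpsi α (n + n) ψ = univ.map ⟨symmExt ψ, symmExt_injective ψ⟩ := by
  ext x
  simp only [Xpsi, mem_filter, mem_univ, true_and, mem_map, Embedding.coeFn_mk]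
  constructor
  · intro hx
    refine ⟨fun i => x (Fin.castAdd n i),
      funext fun j => Fin.addCases (fun i => ?_) (fun i => ?_) j⟩
    · rw [symmExt, Fin.append_left]
    · rw [symmExt, Fin.append_right, comp_apply, comp_apply, ← rev_natAdd_self,
        hx, hψ]
  · rintro ⟨f, rfl⟩ j
    refine Fin.addCases (fun i => ?_) (fun i => ?_) j
    · rw [rev_castAdd_self, symmExt, Fin.append_left, Fin.append_right, comp_apply,
        comp_apply, Fin.rev_rev]
    · rw [rev_natAdd_self, symmExt, Fin.append_left, Fin.append_right, comp_apply,
        comp_apply, hψ]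

lemma card_Xpsi [Fintype α] (hψ : Involutive ψ) :
    #(Xpsi α (n + n) ψ) = Fintype.card α ^ n := by
  simp [Xpsi_eq_map ψ hψ]

lemma occCount_symmExt (hψ : Involutive ψ) (hfree : ∀ y, ψ y ≠ y) (f : Fin n → α)
    (y : α) : occCount (symmExt ψ f) y = hitCount {y, ψ y} f := by
  have hright : #{i : Fin n | ψ (f i.rev) = y} = #{i | f i = ψ y} := by
    simp only [card_filter, hψ.eq_iff]
    exact Fintype.sum_equiv Fin.revPerm _ _ fun i => by simp
  have hpair : #{i | f i ∈ ({y, ψ y} : Finset α)} = #{i | f i = y} + #{i | f i = ψ y} := by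
    simp only [mem_insert, mem_singleton, filter_or]
    exact card_union_of_disjoint
      (disjoint_filter.mpr fun i _ hy hψy => hfree y (hψy.symm.trans hy))
  rw [occCount, hitCount, hpair, ← hright, card_filter, card_filter, card_filter,
    Fin.sum_univ_add]
  simp only [symmExt, Fin.append_left, Fin.append_right, comp_apply]

end Symmetric

section Moments

-- Summed over all values `y`, `occWeight (occCount x y)` is `2 * mCount x 0 + mCount x 1`.
def occWeight : ℕ → ℕ
  | 0 => 2
  | 1 => 1
  | _ + 2 => 0

lemma occWeight_eq (a : ℕ) :
    occWeight a = 2 * (if a = 0 then 1 else 0) + if a = 1 then 1 else 0 := by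
  rcases a with _ | _ | a <;> simp [occWeight]

lemma occWeight_sq (a : ℕ) :
    occWeight a ^ 2 = 4 * (if a = 0 then 1 else 0) + if a = 1 then 1 else 0 := by
  rcases a with _ | _ | a <;> simp [occWeight]

lemma occWeight_mul (a b : ℕ) :
    occWeight a * occWeight b =
      4 * (if a = 0 ∧ b = 0 then 1 else 0) + 2 * (if a = 0 ∧ b = 1 then 1 else 0) +
      2 * (if a = 1 ∧ b = 0 then 1 else 0) + if a = 1 ∧ b = 1 then 1 else 0 := by
  rcases a with _ | _ | a <;> rcases b with _ | _ | b <;> simp [occWeight]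

variable {α : Type*} [Fintype α] [DecidableEq α]

lemma card_hitCount_eq_countHits_empty (P : Finset α) (n i : ℕ) :
    #{f : Fin n → α | hitCount P f = i} = countHits P ∅ n i 0 := by
  simp [countHits]

lemma sum_occWeight_hitCount (P : Finset α) (n : ℕ) :
    ∑ f : Fin (n + 1) → α, occWeight (hitCount P f) =
      2 * #Pᶜ ^ (n + 1) + (n + 1) * #P * #Pᶜ ^ n := by
  simp only [occWeight_eq, sum_add_distrib, ← mul_sum, ← card_filter,
    card_hitCount_eq_countHits_empty,
    countHits_zero_zero (disjoint_empty_right P), countHits_one_zero (disjoint_empty_right P),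
    union_empty]

lemma sum_occWeight_hitCount_sq (P : Finset α) (n : ℕ) :
    ∑ f : Fin (n + 1) → α, occWeight (hitCount P f) ^ 2 =
      4 * #Pᶜ ^ (n + 1) + (n + 1) * #P * #Pᶜ ^ n := by
  simp only [occWeight_sq, sum_add_distrib, ← mul_sum, ← card_filter,
    card_hitCount_eq_countHits_empty,
    countHits_zero_zero (disjoint_empty_right P), countHits_one_zero (disjoint_empty_right P),
    union_empty]

lemma sum_occWeight_hitCount_mul {P Q : Finset α} (hPQ : Disjoint P Q) (n : ℕ) :
    ∑ f : Fin (n + 2) → α, occWeight (hitCount P f) * occWeight (hitCount Q f) =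
      4 * #(P ∪ Q)ᶜ ^ (n + 2) + 2 * ((n + 2) * #Q * #(P ∪ Q)ᶜ ^ (n + 1)) +
      2 * ((n + 2) * #P * #(P ∪ Q)ᶜ ^ (n + 1)) +
      (n + 2) * (n + 1) * #P * #Q * #(P ∪ Q)ᶜ ^ n := by
  simp only [occWeight_mul, sum_add_distrib, ← mul_sum, ← card_filter]
  rw [← countHits, ← countHits, ← countHits, ← countHits, countHits_zero_zero hPQ,
    countHits_zero_one hPQ, countHits_one_zero hPQ, countHits_one_one hPQ]

end Moments

section Pairs

variable {α : Type*} [DecidableEq α] {ψ : α → α}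

lemma pair_eq_of_mem (hψ : Involutive ψ) {y y' : α} (h : y' ∈ ({y, ψ y} : Finset α)) :
    ({y', ψ y'} : Finset α) = {y, ψ y} := by
  simp only [mem_insert, mem_singleton] at h
  rcases h with rfl | rfl
  · rfl
  · rw [hψ, pair_comm]

lemma disjoint_pair_of_not_mem (hψ : Involutive ψ) {y y' : α}
    (h : y' ∉ ({y, ψ y} : Finset α)) : Disjoint ({y, ψ y} : Finset α) {y', ψ y'} := by
  simp only [mem_insert, mem_singleton, not_or] at h
  simp only [disjoint_insert_left, disjoint_insert_right, mem_insert, mem_singleton,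
    disjoint_singleton, not_or]
  grind [hψ y, hψ y']

variable [Fintype α]

lemma card_compl_pair (hfree : ∀ y, ψ y ≠ y) (y : α) :
    #({y, ψ y} : Finset α)ᶜ = Fintype.card α - 2 := by
  rw [card_compl, card_pair (hfree y).symm]

lemma card_compl_union_pair (hψ : Involutive ψ) (hfree : ∀ y, ψ y ≠ y) {y y' : α}
    (h : y' ∉ ({y, ψ y} : Finset α)) :
    #(({y, ψ y} : Finset α) ∪ {y', ψ y'})ᶜ = Fintype.card α - 4 := by
  rw [card_compl, card_union_of_disjoint (disjoint_pair_of_not_mem hψ h),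
    card_pair (hfree y).symm, card_pair (hfree y').symm]

variable (ψ)

lemma sum_sum_occWeight_pair (hfree : ∀ y, ψ y ≠ y) (n : ℕ) :
    ∑ f : Fin (n + 1) → α, ∑ y, occWeight (hitCount {y, ψ y} f) =
      Fintype.card α *
        (2 * (Fintype.card α - 2) ^ (n + 1) + 2 * (n + 1) * (Fintype.card α - 2) ^ n) := by
  rw [sum_comm]
  simp only [sum_occWeight_hitCount, card_compl_pair hfree, card_pair (hfree _).symm, sum_const,
    card_univ, smul_eq_mul]
  ring

lemma sum_sq_sum_occWeight_pair (hψ : Involutive ψ) (hfree : ∀ y, ψ y ≠ y) (n : ℕ) :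
    ∑ f : Fin (n + 2) → α, (∑ y, occWeight (hitCount {y, ψ y} f)) ^ 2 =
      Fintype.card α *
        (2 * (4 * (Fintype.card α - 2) ^ (n + 2) + 2 * (n + 2) * (Fintype.card α - 2) ^ (n + 1)) +
        (Fintype.card α - 2) * (4 * (Fintype.card α - 4) ^ (n + 2) +
          8 * (n + 2) * (Fintype.card α - 4) ^ (n + 1) +
          4 * (n + 2) * (n + 1) * (Fintype.card α - 4) ^ n)) := by
  have hdiag (y : α) : ∀ y' ∈ ({y, ψ y} : Finset α),
      ∑ f : Fin (n + 2) → α,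
        occWeight (hitCount {y, ψ y} f) * occWeight (hitCount {y', ψ y'} f) =
        4 * (Fintype.card α - 2) ^ (n + 2) + 2 * (n + 2) * (Fintype.card α - 2) ^ (n + 1) := by
    intro y' hy'
    simp only [pair_eq_of_mem hψ hy', ← sq, sum_occWeight_hitCount_sq, card_compl_pair hfree,
      card_pair (hfree y).symm]
    ring
  have hoff (y : α) : ∀ y' ∈ ({y, ψ y} : Finset α)ᶜ,
      ∑ f : Fin (n + 2) → α,
        occWeight (hitCount {y, ψ y} f) * occWeight (hitCount {y', ψ y'} f) =
        4 * (Fintype.card α - 4) ^ (n + 2) + 8 * (n + 2) * (Fintype.card α - 4) ^ (n + 1) +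
          4 * (n + 2) * (n + 1) * (Fintype.card α - 4) ^ n := by
    intro y' hy'
    rw [mem_compl] at hy'
    rw [sum_occWeight_hitCount_mul (disjoint_pair_of_not_mem hψ hy'),
      card_compl_union_pair hψ hfree hy', card_pair (hfree y).symm, card_pair (hfree y').symm]
    ring
  calc ∑ f : Fin (n + 2) → α, (∑ y, occWeight (hitCount {y, ψ y} f)) ^ 2
      = ∑ y, (∑ y' ∈ {y, ψ y}, ∑ f : Fin (n + 2) → α,
            occWeight (hitCount {y, ψ y} f) * occWeight (hitCount {y', ψ y'} f) +
          ∑ y' ∈ ({y, ψ y} : Finset α)ᶜ, ∑ f : Fin (n + 2) → α,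
            occWeight (hitCount {y, ψ y} f) * occWeight (hitCount {y', ψ y'} f)) := by
        simp only [sq, sum_mul_sum, sum_add_sum_compl]
        rw [sum_comm]
        exact sum_congr rfl fun y _ => sum_comm
    _ = _ := by
        simp only [sum_const_nat (hdiag _), sum_const_nat (hoff _), card_compl_pair hfree,
          card_pair (hfree _).symm, sum_const, card_univ, smul_eq_mul]

end Pairs

section Estimates

lemma card_filter_le_mul_sq_le {ι : Type*} (s : Finset ι) (T : ι → ℝ) (t : ℝ)
    (ht : t * #s ≤ ∑ x ∈ s, T x) :
    #{x ∈ s | T x ≤ t} * (∑ x ∈ s, T x - t * #s) ^ 2 ≤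
      #s * (#s * ∑ x ∈ s, T x ^ 2 - (∑ x ∈ s, T x) ^ 2) := by
  set N : ℝ := ((#s : ℕ) : ℝ)
  set S : ℝ := ∑ x ∈ s, T x
  have hvar : ∑ x ∈ s, (N * T x - S) ^ 2 = N * (N * ∑ x ∈ s, T x ^ 2 - S ^ 2) := by
    simp only [sub_sq, sum_add_distrib, sum_sub_distrib, mul_pow, ← mul_sum, ← sum_mul,
      sum_const, nsmul_eq_mul]
    ring
  rw [← hvar, ← sum_filter_add_sum_filter_not s (T · ≤ t), ← nsmul_eq_mul, ← sum_const]
  refine le_add_of_le_of_nonneg (sum_le_sum fun x hx => ?_) (sum_nonneg fun _ _ => sq_nonneg _)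
  have hx : T x ≤ t := (mem_filter.mp hx).2
  have hN : 0 ≤ N := Nat.cast_nonneg _
  nlinarith [mul_le_mul_of_nonneg_left hx hN]

lemma exp_neg_one_le_pow (k : ℕ) : Real.exp (-1) ≤ ((k + 1 : ℝ) / (k + 2)) ^ (k + 1) := by
  have h := Real.one_add_inv_pow_le_exp (n := k + 1)
  have hbase : (1 + ((k + 1 : ℕ) : ℝ)⁻¹) = ((k + 1 : ℝ) / (k + 2))⁻¹ := by
    push_cast; field_simp; ring
  rw [hbase, inv_pow] at h
  rw [Real.exp_neg]
  exact inv_le_of_inv_le₀ (by positivity) h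

lemma first_moment_gap (k : ℕ) (m : ℝ) (hm : m = 2 * k + 4) (h : 1000 ≤ m) :
    21 / 20 * m * m ^ (k + 2) + m ^ (k + 3) / 20 ≤ m * (3 * m - 4) * (m - 2) ^ (k + 1) := by
  have hratio : (m - 2) ^ (k + 1) = ((k + 1 : ℝ) / (k + 2)) ^ (k + 1) * m ^ (k + 1) := by
    rw [← mul_pow]; congr 1; rw [hm]; field_simp; ring
  have he : Real.exp (-1) ≥ 1 / 2.7182818286 := by
    rw [Real.exp_neg, one_div]
    exact inv_anti₀ (Real.exp_pos 1) Real.exp_one_lt_d9.le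
  have hpow : 1 / 2.7182818286 * m ^ (k + 1) ≤ (m - 2) ^ (k + 1) := by
    rw [hratio]
    exact mul_le_mul_of_nonneg_right (he.le.trans (exp_neg_one_le_pow k)) (by positivity)
  have hm0 : 0 < m * m ^ (k + 1) := by positivity
  calc 21 / 20 * m * m ^ (k + 2) + m ^ (k + 3) / 20 = 11 / 10 * m * (m * m ^ (k + 1)) := by ring
    _ ≤ (3 * m - 4) * (1 / 2.7182818286) * (m * m ^ (k + 1)) :=
        mul_le_mul_of_nonneg_right (by linarith) hm0.le
    _ = m * (3 * m - 4) * (1 / 2.7182818286 * m ^ (k + 1)) := by ring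
    _ ≤ m * (3 * m - 4) * (m - 2) ^ (k + 1) := mul_le_mul_of_nonneg_left hpow (by nlinarith)

lemma second_moment_le (k : ℕ) (m : ℝ) (h : 4 ≤ m) :
    m ^ (k + 2) * (m * (2 * (5 * m - 8) * (m - 2) ^ (k + 1) +
        (m - 2) * (9 * m ^ 2 - 50 * m + 64) * (m - 4) ^ k)) ≤
      (m * (3 * m - 4) * (m - 2) ^ (k + 1)) ^ 2 + 10 * m ^ (2 * k + 5) := by
  have hm0 : 0 ≤ m := by linarith
  have hm2 : 0 ≤ m - 2 := by linarith
  have hdiag : m ^ (k + 2) * (m * (2 * (5 * m - 8) * (m - 2) ^ (k + 1))) ≤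
      10 * m ^ (2 * k + 5) := by
    have hpow : 2 * (5 * m - 8) * (m - 2) ^ (k + 1) ≤ 10 * m * m ^ (k + 1) :=
      mul_le_mul (by linarith) (pow_le_pow_left₀ hm2 (by linarith) _) (by positivity)
        (by linarith)
    calc m ^ (k + 2) * (m * (2 * (5 * m - 8) * (m - 2) ^ (k + 1)))
        ≤ m ^ (k + 2) * (m * (10 * m * m ^ (k + 1))) := by gcongr
      _ = 10 * m ^ (2 * k + 5) := by ring
  -- AM-GM: `m (m - 4) ≤ (m - 2) ^ 2`, the source of the cancellation at leading order.
  have hamgm : (m * (m - 4)) ^ k ≤ ((m - 2) ^ 2) ^ k :=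
    pow_le_pow_left₀ (by nlinarith) (by nlinarith) k
  have hcubic : m * (9 * m ^ 2 - 50 * m + 64) ≤ (3 * m - 4) ^ 2 * (m - 2) := by nlinarith
  have hA : 0 ≤ m ^ 2 * (m - 2) := by positivity
  have hoff : m ^ (k + 2) * (m * ((m - 2) * (9 * m ^ 2 - 50 * m + 64) * (m - 4) ^ k)) ≤
      (m * (3 * m - 4) * (m - 2) ^ (k + 1)) ^ 2 := by
    calc m ^ (k + 2) * (m * ((m - 2) * (9 * m ^ 2 - 50 * m + 64) * (m - 4) ^ k))
        = m ^ 2 * (m - 2) * (m * (9 * m ^ 2 - 50 * m + 64)) * (m * (m - 4)) ^ k := by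
          rw [mul_pow]; ring
      _ ≤ m ^ 2 * (m - 2) * ((3 * m - 4) ^ 2 * (m - 2)) * ((m - 2) ^ 2) ^ k :=
          mul_le_mul (mul_le_mul_of_nonneg_left hcubic hA) hamgm
            (pow_nonneg (by nlinarith) k) (by positivity)
      _ = (m * (3 * m - 4) * (m - 2) ^ (k + 1)) ^ 2 := by rw [← pow_mul]; ring
  linarith

end Estimates

section Concentration

variable {α : Type*} [Fintype α] [DecidableEq α] {ψ : α → α}

lemma sum_Xpsi_eq_sum (hψ : Involutive ψ) (hfree : ∀ y, ψ y ≠ y) {β : Type*}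
    [AddCommMonoid β] (g : ℕ → β) (n : ℕ) :
    ∑ x ∈ Xpsi α (n + n) ψ, g (∑ y, occWeight (occCount x y)) =
      ∑ f : Fin n → α, g (∑ y, occWeight (hitCount {y, ψ y} f)) := by
  simp only [Xpsi_eq_map ψ hψ, sum_map, Embedding.coeFn_mk, occCount_symmExt ψ hψ hfree]

lemma sum_weight_Xpsi (hψ : Involutive ψ) (hfree : ∀ y, ψ y ≠ y) {k : ℕ}
    (hcard : Fintype.card α = 2 * k + 4) :
    ∑ x ∈ Xpsi α (k + 2 + (k + 2)) ψ, ((∑ y, occWeight (occCount x y) : ℕ) : ℝ) =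
      Fintype.card α * (3 * Fintype.card α - 4) * (Fintype.card α - 2) ^ (k + 1) := by
  rw [sum_Xpsi_eq_sum hψ hfree, ← Nat.cast_sum, sum_sum_occWeight_pair ψ hfree (k + 1),
    hcard, show 2 * k + 4 - 2 = 2 * k + 2 by omega]
  push_cast
  ring

lemma sum_sq_weight_Xpsi (hψ : Involutive ψ) (hfree : ∀ y, ψ y ≠ y) {k : ℕ}
    (hcard : Fintype.card α = 2 * k + 4) :
    ∑ x ∈ Xpsi α (k + 2 + (k + 2)) ψ, ((∑ y, occWeight (occCount x y) : ℕ) : ℝ) ^ 2 =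
      Fintype.card α * (2 * (5 * Fintype.card α - 8) * (Fintype.card α - 2) ^ (k + 1) +
        (Fintype.card α - 2) * (9 * Fintype.card α ^ 2 - 50 * Fintype.card α + 64) *
          (Fintype.card α - 4) ^ k) := by
  rw [sum_Xpsi_eq_sum hψ hfree (fun a : ℕ => (a : ℝ) ^ 2)]
  simp only [← Nat.cast_pow]
  rw [← Nat.cast_sum, sum_sq_sum_occWeight_pair ψ hψ hfree k, hcard,
    show 2 * k + 4 - 2 = 2 * k + 2 by omega, show 2 * k + 4 - 4 = 2 * k by omega]
  push_cast
  ring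

lemma card_filter_weight_le_le (hψ : Involutive ψ) (hfree : ∀ y, ψ y ≠ y) {k : ℕ}
    (hcard : Fintype.card α = 2 * k + 4) (h1000 : 1000 ≤ Fintype.card α) :
    (#{x ∈ Xpsi α (k + 2 + (k + 2)) ψ |
        ((∑ y, occWeight (occCount x y) : ℕ) : ℝ) ≤ 21 / 20 * Fintype.card α} : ℝ) ≤
      4000 * (Fintype.card α : ℝ) ^ (k + 1) := by
  have hcheb := card_filter_le_mul_sq_le (Xpsi α (k + 2 + (k + 2)) ψ)
    (fun x => ((∑ y, occWeight (occCount x y) : ℕ) : ℝ)) (21 / 20 * Fintype.card α)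
  rw [sum_weight_Xpsi hψ hfree hcard, sum_sq_weight_Xpsi hψ hfree hcard, card_Xpsi ψ hψ,
    Nat.cast_pow] at hcheb
  set m : ℝ := ((Fintype.card α : ℕ) : ℝ)
  set E : ℝ := ((#{x ∈ Xpsi α (k + 2 + (k + 2)) ψ |
    ((∑ y, occWeight (occCount x y) : ℕ) : ℝ) ≤ 21 / 20 * m} : ℕ) : ℝ)
  have hm : m = 2 * k + 4 := by simp only [m, hcard]; push_cast; ring
  have hm1000 : 1000 ≤ m := by simp only [m]; exact_mod_cast h1000
  have hgap := first_moment_gap k m hm hm1000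
  have hvar := second_moment_le k m (by linarith)
  specialize hcheb (by linarith [pow_pos (by linarith : 0 < m) (k + 3)])
  have hE : E * (m ^ (k + 3)) ^ 2 ≤ 4000 * m ^ (k + 1) * (m ^ (k + 3)) ^ 2 := by
    calc E * (m ^ (k + 3)) ^ 2 = 400 * (E * (m ^ (k + 3) / 20) ^ 2) := by ring
      _ ≤ 400 * (E * (m * (3 * m - 4) * (m - 2) ^ (k + 1) - 21 / 20 * m * m ^ (k + 2)) ^ 2) := by
          gcongr
          linarith
      _ ≤ 400 * (m ^ (k + 2) * (10 * m ^ (2 * k + 5))) := by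
          refine mul_le_mul_of_nonneg_left
            (hcheb.trans (mul_le_mul_of_nonneg_left ?_ (by positivity))) (by norm_num)
          linarith
      _ = 4000 * m ^ (k + 1) * (m ^ (k + 3)) ^ 2 := by ring
  exact le_of_mul_le_mul_right hE (by positivity)

lemma card_filter_weight_le_lt (hψ : Involutive ψ) (hfree : ∀ y, ψ y ≠ y)
    (heven : Even (Fintype.card α)) (h1000 : 1000 ≤ Fintype.card α) {ε : ℝ}
    (hε : 4000 < ε * Fintype.card α) :
    (#{x ∈ Xpsi α (Fintype.card α) ψ |
        20 * ∑ y, occWeight (occCount x y) ≤ 21 * Fintype.card α} : ℝ) <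
      ε * #(Xpsi α (Fintype.card α) ψ) := by
  obtain ⟨n, hn⟩ := heven
  obtain ⟨k, rfl⟩ : ∃ k, n = k + 2 := ⟨n - 2, by omega⟩
  have hbound := card_filter_weight_le_le hψ hfree (by omega : Fintype.card α = 2 * k + 4) h1000
  have hfilter : {x ∈ Xpsi α (k + 2 + (k + 2)) ψ |
      20 * ∑ y, occWeight (occCount x y) ≤ 21 * (k + 2 + (k + 2))} =
      {x ∈ Xpsi α (k + 2 + (k + 2)) ψ |
        ((∑ y, occWeight (occCount x y) : ℕ) : ℝ) ≤ 21 / 20 * Fintype.card α} := by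
    refine filter_congr fun x _ => ?_
    generalize ∑ y, occWeight (occCount x y) = a
    rw [← Nat.cast_le (α := ℝ), hn]
    push_cast
    constructor <;> intro h <;> linarith
  rw [hn, hfilter, card_Xpsi ψ hψ, Nat.cast_pow]
  calc _ ≤ 4000 * (Fintype.card α : ℝ) ^ (k + 1) := hbound
    _ < ε * Fintype.card α * (Fintype.card α : ℝ) ^ (k + 1) := by gcongr
    _ = _ := by ring

end Concentration

section Covering

variable {α : Type*} [Fintype α] [DecidableEq α]

lemma occWeight_le {r s : ℕ} (hrs : 1 ≤ r + s) (a : ℕ) :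
    occWeight a ≤ (if a ≤ r then 1 else 0) + if a ≤ s then 1 else 0 := by
  rcases a with _ | _ | a <;> simp only [occWeight] <;> split_ifs <;> omega

lemma sum_occWeight_le_card_add_card {r s : ℕ} (hrs : 1 ≤ r + s) {M : ℕ} (x : Fin M → α) :
    ∑ y, occWeight (occCount x y) ≤ #{y | occCount x y ≤ r} + #{y | occCount x y ≤ s} := by
  rw [card_filter, card_filter, ← sum_add_distrib]
  exact sum_le_sum fun y _ => occWeight_le hrs _

lemma card_add_card_le_card_add_card_inter (B L : Finset α) :
    #B + #L ≤ Fintype.card α + #(B ∩ L) := by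
  have := card_union_add_card_inter B L
  have := card_le_univ (B ∪ L)
  omega

lemma exists_mem_apply_mem {φ : α → α} (hφ : Injective φ) {S S' : Finset α}
    (h : Fintype.card α < #S + #S') : ∃ u ∈ S, φ u ∈ S' := by
  obtain ⟨v, hv⟩ := inter_nonempty_of_card_lt_card_add_card (subset_univ (S.map ⟨φ, hφ⟩))
    (subset_univ S') (by rwa [card_map, card_univ])
  obtain ⟨⟨u, hu, rfl⟩, hv⟩ := mem_inter.mp hv |>.imp_left mem_map.mp
  exact ⟨u, hu, hv⟩

lemma exists_pair_of_weight {r s : ℕ} (hrs : 1 ≤ r + s) {φ : α → α} (hφ : Injective φ)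
    {M : ℕ} (x : Fin M → α) (hx : 21 * Fintype.card α < 20 * ∑ y, occWeight (occCount x y))
    {B : Finset α} (hB : 39 / 40 * (Fintype.card α : ℝ) < #B) :
    ∃ u ∈ B, ∃ v ∈ B, φ u = v ∧ occCount x u ≤ r ∧ occCount x v ≤ s := by
  set Lr : Finset α := {y | occCount x y ≤ r}
  set Ls : Finset α := {y | occCount x y ≤ s}
  have hL : (21 : ℝ) * Fintype.card α < 20 * (#Lr + #Ls) := by
    exact_mod_cast hx.trans_le (Nat.mul_le_mul_left 20 (sum_occWeight_le_card_add_card hrs x))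
  have hr : (#B + #Lr : ℝ) ≤ Fintype.card α + #(B ∩ Lr) := by
    exact_mod_cast card_add_card_le_card_add_card_inter B Lr
  have hs : (#B + #Ls : ℝ) ≤ Fintype.card α + #(B ∩ Ls) := by
    exact_mod_cast card_add_card_le_card_add_card_inter B Ls
  obtain ⟨u, hu, hv⟩ := exists_mem_apply_mem hφ (S := B ∩ Lr) (S' := B ∩ Ls) (by
    exact_mod_cast (by linarith : (Fintype.card α : ℝ) < #(B ∩ Lr) + #(B ∩ Ls)))
  simp only [Lr, Ls, mem_inter, mem_filter, mem_univ, true_and] at hu hv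
  exact ⟨u, hu.1, φ u, hv.1, rfl, hu.2, hv.2⟩

end Covering

theorem stmt_19 (r s : ℕ) (hrs : 1 ≤ r + s) (ε : ℝ) (hε : 0 < ε) :
    ∃ c : ℝ, (0 < c ∧ c ≤ 1) ∧ ∃ M₀ : ℕ, 0 < M₀ ∧
      ∀ (α : Type) [Fintype α] [DecidableEq α],
        Even (Fintype.card α) → M₀ ≤ Fintype.card α →
        ∀ ψ : α → α, (∀ y, ψ (ψ y) = y) → (∀ y, ψ y ≠ y) →
        ∃ E ⊆ Xpsi α (Fintype.card α) ψ,
          (E.card : ℝ) < ε * (Xpsi α (Fintype.card α) ψ).card ∧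
          ∀ B : Finset α, c * (Fintype.card α : ℝ) < B.card →
          ∀ x ∈ Xpsi α (Fintype.card α) ψ \ E,
          ∀ φ : α → α, Function.Bijective φ →
          ∃ u ∈ B, ∃ v ∈ B, φ u = v ∧ occCount x u ≤ r ∧ occCount x v ≤ s := by
  refine ⟨39 / 40, by norm_num, max 1000 (⌈4000 / ε⌉₊ + 1), by positivity, ?_⟩
  intro α _ _ heven hM ψ hψ hfree
  have hε' : 4000 < ε * Fintype.card α := by
    have h := Nat.lt_of_ceil_lt (Nat.lt_of_succ_le (le_of_max_le_right hM))
    rwa [div_lt_iff₀ hε, mul_comm] at h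
  refine ⟨_, filter_subset _ _,
    card_filter_weight_le_lt hψ hfree heven (le_of_max_le_left hM) hε', ?_⟩
  intro B hB x hx φ hφ
  rw [mem_sdiff, mem_filter, not_and, not_le] at hx
  exact exists_pair_of_weight hrs hφ.injective x (hx.2 hx.1) hB
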